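/- arXiv:1911.11388 — 3 statements merged into one kernel-verified Lean document; each statement's English description precedes it below -/
import Mathlib

section
/- Let G be a finite directed graph on vertex set V and let B assign an input to each vertex in a driver set W ⊆ V. If every vertex of V is reachable from W and the bipartite graph of G augmented by edges from fresh input vertices to the vertices of W has a matching saturating V⁻, then there exists a spanning subgraph of G ∪ (input edges) consisting of vertex-disjoint cycles and paths starting at input vertices that together cover all vertices of V. -/
/-- Iterated predecessor: follow a partial predecessor map `p` for `k` steps. -/
def predIter {V : Type*} (p : V → Option V) : ℕ → V → Option V
  | 0, v => some v
  | k + 1, v => (predIter p k v).bind p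

/-- Edges of the bipartite graph of `G = (V, E)` augmented by fresh input
vertices (`Sum.inr w`) attached to the driver nodes `w ∈ W`. -/
def augEdge {V : Type*} (E : V → V → Prop) (W : Set V) : V ⊕ V → V → Prop :=
  fun a v => match a with
  | Sum.inl u => E u v
  | Sum.inr w => w ∈ W ∧ v = w

/-- If every vertex is reachable from the driver set `W` and the augmented
bipartite graph has a matching saturating `V⁻`, then there is a spanning family
of vertex-disjoint cycles of `G` and paths starting at input vertices covering
all vertices: a predecessor map `p` (injective on its `some` part, following
edges of `G`, with `p v = none` only at driver nodes) under which every vertex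
lies on a cycle or on a chain ending at a driver node. -/
theorem saturating_matching_gives_cycle_path_cover {V : Type*} [Fintype V]
    [DecidableEq V] (E : V → V → Prop) (W : Set V)
    (hreach : ∀ v : V, ∃ w ∈ W, Relation.ReflTransGen E w v)
    (M : Finset ((V ⊕ V) × V))
    (hedges : ∀ q ∈ M, augEdge E W q.1 q.2)
    (hmatch : ∀ q ∈ M, ∀ r ∈ M, q ≠ r → q.1 ≠ r.1 ∧ q.2 ≠ r.2)
    (hsat : ∀ v : V, ∃ a, (a, v) ∈ M) :
    ∃ p : V → Option V,
      (∀ v u, p v = some u → E u v) ∧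
      (∀ v, p v = none → v ∈ W) ∧
      (∀ v₁ v₂ u, p v₁ = some u → p v₂ = some u → v₁ = v₂) ∧
      (∀ v : V, (∃ k, 0 < k ∧ predIter p k v = some v) ∨
        (∃ k w, predIter p k v = some w ∧ p w = none)) := by
  classical
  have ha : ∀ v : V, ∃ a, (a, v) ∈ M := hsat
  choose a haM using ha
  set p : V → Option V := fun v => (a v).getLeft? with hpdef
  have hsome : ∀ v u, p v = some u → (Sum.inl u, v) ∈ M := by
    intro v u h
    have hav : a v = Sum.inl u := by
      cases hv : a v with
      | inl u' => simp [hpdef, hv] at h; rw [h]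
      | inr w => simp [hpdef, hv] at h
    have hm := haM v
    rwa [hav] at hm
  have hinj : ∀ v₁ v₂ u, p v₁ = some u → p v₂ = some u → v₁ = v₂ := by
    intro v₁ v₂ u h1 h2
    by_contra hne
    have := (hmatch _ (hsome _ _ h1) _ (hsome _ _ h2)
      (by simp [hne])).1
    simp at this
  refine ⟨p, ?_, ?_, hinj, ?_⟩
  · intro v u h
    have := hedges _ (hsome v u h)
    exact this
  · intro v h
    cases hv : a v with
    | inl u => simp [hpdef, hv] at h
    | inr w =>
      have := hedges _ (haM v)
      rw [hv] at this
      obtain ⟨hw, hvw⟩ := this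
      have hvw' : v = w := hvw
      rwa [hvw']
  · intro v
    by_cases h : ∃ k w, predIter p k v = some w ∧ p w = none
    · exact Or.inr h
    · push_neg at h
      left
      have hall : ∀ n, ∃ x, predIter p n v = some x := by
        intro n
        induction n with
        | zero => exact ⟨v, rfl⟩
        | succ n ih =>
          obtain ⟨x, hx⟩ := ih
          have hpx := h n x hx
          cases hpx' : p x with
          | none => exact absurd hpx' hpx
          | some y => exact ⟨y, by rw [predIter, hx]; simpa using hpx'⟩
      choose g hg using hall
      have hg0 : g 0 = v := by
        have := hg 0
        simp only [predIter] at this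
        exact (Option.some_injective _ this).symm
      have hstep : ∀ n, p (g n) = some (g (n + 1)) := by
        intro n
        have h1 := hg (n + 1)
        rw [predIter, hg n] at h1
        simpa using h1
      have hcancel : ∀ i j, g (i + 1) = g (j + 1) → g i = g j := by
        intro i j hij
        exact hinj _ _ _ (hstep i) (hij ▸ hstep j)
      have hshift : ∀ i j, g i = g (i + j) → g 0 = g j := by
        intro i
        induction i with
        | zero => intro j hj; simpa using hj
        | succ i ih =>
          intro j hj
          apply ih
          apply hcancel
          rw [hj]; ring_nf
      obtain ⟨i, j, hne, hij⟩ := Finite.exists_ne_map_eq_of_infinite g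
      rcases hne.lt_or_gt with hlt | hlt
      · refine ⟨j - i, by omega, ?_⟩
        have : g 0 = g (j - i) := hshift i (j - i) (by rw [hij]; congr 1; omega)
        rw [hg (j - i), ← this, hg0]
      · refine ⟨i - j, by omega, ?_⟩
        have : g 0 = g (i - j) := hshift j (i - j) (by rw [← hij]; congr 1; omega)
        rw [hg (i - j), ← this, hg0]
end

section
/- In a finite directed graph whose associated bipartite graph has a matching saturating V⁻ (equivalently, structural rank n) and which is strongly connected, selecting any single vertex as a driver node satisfies both conditions of Lin's structural controllability criterion: every vertex is input-connected, and there is a disjoint family of cycles and input-connected paths covering all vertices. -/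
/-- `M` is a matching of the bipartite graph associated with the digraph `E`
(with `V⁺ = V⁻ = V` and an edge `(u⁺, v⁻)` iff `E u v`). -/
def IsBipMatching {V : Type*} (E : V → V → Prop) (M : Finset (V × V)) : Prop :=
  (∀ p ∈ M, E p.1 p.2) ∧
  (∀ p ∈ M, ∀ q ∈ M, p ≠ q → p.1 ≠ q.1 ∧ p.2 ≠ q.2)

/-- In a strongly connected digraph whose bipartite graph has a matching
saturating `V⁻`, any single driver node `w` satisfies both conditions of Lin's
criterion: every vertex is input-connected (reachable from `w`), and there is a
disjoint family of cycles covering all vertices (a permutation `σ` with every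
`E (σ v) v` an edge, whose cycles are vertex-disjoint and cover `V`). -/
theorem single_driver_suffices {V : Type*} [Fintype V] [DecidableEq V]
    (E : V → V → Prop)
    (hsc : ∀ u v : V, Relation.ReflTransGen E u v)
    (M : Finset (V × V)) (hM : IsBipMatching E M)
    (hsat : ∀ v : V, ∃ u, (u, v) ∈ M) :
    ∀ w : V, (∀ v : V, Relation.ReflTransGen E w v) ∧
      ∃ σ : Equiv.Perm V, ∀ v : V, E (σ v) v := by
  intro w
  refine ⟨fun v => hsc w v, ?_⟩
  choose f hf using hsat
  have hinj : Function.Injective f := by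
    intro a b hab
    by_contra hne
    have := (hM.2 (f a, a) (hf a) (f b, b) (hf b) (by simp [hne])).1
    exact this hab
  refine ⟨Equiv.ofBijective f (Finite.injective_iff_bijective.mp hinj), fun v => ?_⟩
  exact hM.1 (f v, v) (hf v)
end

section
/- Let G be a finite directed graph, M a maximum matching of its associated bipartite graph, and v an unmatched vertex of V⁻. Let D_v be the set of vertices of V⁻ reachable from v by M-alternating paths in the auxiliary graph. Then for every u ∈ D_v there exists a maximum matching M' of the same size as M under which u is unmatched. -/
/-- One step of an `M`-alternating path between vertices of `V⁻` in the
auxiliary graph: go from `b` along a non-matching edge back to some `a ∈ V⁺`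
and then along the (reversed) matching edge of `a` to `b'`. -/
def AltStep {V : Type*} (E : V → V → Prop) (M : Finset (V × V)) (b b' : V) : Prop :=
  ∃ a, E a b ∧ (a, b) ∉ M ∧ (a, b') ∈ M

/-!
Walking along an alternating path `v = b₀, b₁, …, bₖ = u`, with `(aᵢ, bᵢ₊₁) ∈ M` and `E aᵢ bᵢ`,
we trade each matching edge `(aᵢ, bᵢ₊₁)` for `(aᵢ, bᵢ)`: this keeps the size of the matching and
frees `bᵢ₊₁`. The trade is possible as long as `(aᵢ, bᵢ₊₁)` has not been traded away before,
i.e. as long as `bᵢ₊₁` is a new vertex. Rather than shortening the path to a simple one, we keep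
the set `S` of vertices freed so far, together with, for each of them, a freeing matching which
misses only edges of `M` ending in `S`; a step to a vertex already in `S` needs no trade.
-/

section Freeing

variable {V : Type*} {E : V → V → Prop}

section Exchange

variable [DecidableEq V] {N : Finset (V × V)} {a b c : V}

theorem IsBipMatching.insert_erase (hN : IsBipMatching E N) (hE : E a b)
    (hb : ¬ ∃ x, (x, b) ∈ N) (hac : (a, c) ∈ N) :
    IsBipMatching E (insert (a, b) (N.erase (a, c))) := by
  have fst_ne : ∀ p ∈ N.erase (a, c), p.1 ≠ a := fun p hp h =>
    (hN.2 p (Finset.mem_of_mem_erase hp) _ hac (Finset.ne_of_mem_erase hp)).1 h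
  have snd_ne : ∀ p ∈ N.erase (a, c), p.2 ≠ b := fun p hp h =>
    hb ⟨p.1, h ▸ Finset.mem_of_mem_erase hp⟩
  refine ⟨fun p hp => ?_, fun p hp q hq hpq => ?_⟩
  · rcases Finset.mem_insert.1 hp with rfl | hp
    exacts [hE, hN.1 p (Finset.mem_of_mem_erase hp)]
  · rcases Finset.mem_insert.1 hp with rfl | hp <;> rcases Finset.mem_insert.1 hq with rfl | hq
    · exact absurd rfl hpq
    · exact ⟨(fst_ne q hq).symm, (snd_ne q hq).symm⟩
    · exact ⟨fst_ne p hp, snd_ne p hp⟩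
    · exact hN.2 p (Finset.mem_of_mem_erase hp) q (Finset.mem_of_mem_erase hq) hpq

theorem card_insert_erase_of_unmatched (hb : ¬ ∃ x, (x, b) ∈ N) (hac : (a, c) ∈ N) :
    (insert (a, b) (N.erase (a, c))).card = N.card := by
  have hab : (a, b) ∉ N.erase (a, c) := fun h => hb ⟨a, Finset.mem_of_mem_erase h⟩
  rw [Finset.card_insert_of_notMem hab, Finset.card_erase_add_one hac]

theorem IsBipMatching.unmatched_insert_erase (hN : IsBipMatching E N)
    (hb : ¬ ∃ x, (x, b) ∈ N) (hac : (a, c) ∈ N) :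
    ¬ ∃ x, (x, c) ∈ insert (a, b) (N.erase (a, c)) := by
  rintro ⟨x, hx⟩
  rcases Finset.mem_insert.1 hx with h | h
  · obtain ⟨-, rfl⟩ := Prod.mk.inj h
    exact hb ⟨a, hac⟩
  · exact (hN.2 _ (Finset.mem_of_mem_erase h) _ hac (Finset.ne_of_mem_erase h)).2 rfl

end Exchange

def IsFreeable (E : V → V → Prop) (M : Finset (V × V)) (S : Set V) : Prop :=
  ∀ w ∈ S, ∃ N : Finset (V × V), IsBipMatching E N ∧ N.card = M.card ∧
    (¬ ∃ x, (x, w) ∈ N) ∧ ∀ p ∈ M, p ∉ N → p.2 ∈ S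

variable {M : Finset (V × V)} {S : Set V}

theorem isFreeable_singleton (hM : IsBipMatching E M) {v : V} (hv : ¬ ∃ a, (a, v) ∈ M) :
    IsFreeable E M {v} := by
  rintro w rfl
  exact ⟨M, hM, rfl, hv, fun p hp hpM => absurd hp hpM⟩

theorem IsFreeable.insert_of_altStep (hS : IsFreeable E M S) {b u : V} (hb : b ∈ S)
    (hbu : AltStep E M b u) : IsFreeable E M (insert u S) := by
  classical
  by_cases huS : u ∈ S
  · rwa [Set.insert_eq_of_mem huS]
  obtain ⟨a, hab, -, hau⟩ := hbu
  obtain ⟨N, hN, hcard, hbN, hMN⟩ := hS b hb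
  have hauN : (a, u) ∈ N := by_contra fun h => huS (hMN _ hau h)
  rintro w (rfl | hw)
  · refine ⟨insert (a, b) (N.erase (a, w)), hN.insert_erase hab hbN hauN,
      (card_insert_erase_of_unmatched hbN hauN).trans hcard,
      hN.unmatched_insert_erase hbN hauN, fun p hp hpN => ?_⟩
    by_cases hpa : p = (a, w)
    · exact hpa ▸ Set.mem_insert _ _
    · exact Set.mem_insert_of_mem _
        (hMN p hp fun h => hpN (Finset.mem_insert_of_mem (Finset.mem_erase_of_ne_of_mem hpa h)))
  · obtain ⟨N', hN', hcard', hwN', hMN'⟩ := hS w hw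
    exact ⟨N', hN', hcard', hwN', fun p hp hpN' => Set.mem_insert_of_mem _ (hMN' p hp hpN')⟩

theorem exists_isFreeable_of_reflTransGen (hM : IsBipMatching E M) {v u : V}
    (hv : ¬ ∃ a, (a, v) ∈ M) (hu : Relation.ReflTransGen (AltStep E M) v u) :
    ∃ S, IsFreeable E M S ∧ u ∈ S := by
  induction hu with
  | refl => exact ⟨{v}, isFreeable_singleton hM hv, rfl⟩
  | tail _ hbu ih =>
    obtain ⟨S, hS, hb⟩ := ih
    exact ⟨_, hS.insert_of_altStep hb hbu, Set.mem_insert _ _⟩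

end Freeing

theorem alternating_reachable_equivalent_general {V : Type*}
    (E : V → V → Prop) (M : Finset (V × V)) (hM : IsBipMatching E M)
    (v : V) (hv : ¬ ∃ a, (a, v) ∈ M)
    (u : V) (hu : Relation.ReflTransGen (AltStep E M) v u) :
    ∃ M' : Finset (V × V), IsBipMatching E M' ∧ M'.card = M.card ∧
      ¬ ∃ a, (a, u) ∈ M' := by
  obtain ⟨S, hS, huS⟩ := exists_isFreeable_of_reflTransGen hM hv hu
  obtain ⟨N, hN, hcard, huN, -⟩ := hS u huS
  exact ⟨N, hN, hcard, huN⟩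

/-- Every vertex of `V⁻` reachable by `M`-alternating paths from an unmatched
vertex `v` is unmatched under some maximum matching of the same size:
all nodes of a dilation set are control-equivalent. -/
theorem alternating_reachable_equivalent {V : Type*} [Fintype V] [DecidableEq V]
    (E : V → V → Prop) (M : Finset (V × V)) (hM : IsBipMatching E M)
    (hmax : ∀ M' : Finset (V × V), IsBipMatching E M' → M'.card ≤ M.card)
    (v : V) (hv : ¬ ∃ a, (a, v) ∈ M)
    (u : V) (hu : Relation.ReflTransGen (AltStep E M) v u) :
    ∃ M' : Finset (V × V), IsBipMatching E M' ∧ M'.card = M.card ∧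
      ¬ ∃ a, (a, u) ∈ M' :=
  alternating_reachable_equivalent_general E M hM v hv u hu
end
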